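/- For n >= 3, the number of flattened ({2})-insertion parking functions of order n with exactly 2 runs equals sum_{i=0}^{n-3} 2^i * (n-1-i). -/

import Mathlib

/-!
A word with exactly two runs is `u ++ v` with `u`, `v` sorted and a descent between them, so it is
determined by the content `B` of its second run: it is `sort (C - B) ++ sort B`, where `C` is its
content. Conversely `sort (C - B) ++ sort B` has two runs unless it is sorted. For `C = a ::ₘ M`
with `a` below every element of `M`, flatness forces `a` to open the first run, so `B ≤ M` and the
word is `a :: (sort (M - B) ++ sort B)`, which is sorted exactly when `B` is the content of one of
the `card M + 1` suffixes of `sort M`. For `M = {2, 2, 3, …, n}` there are `3 * 2 ^ (n - 2)`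
sub-multisets, and `3 * 2 ^ (n - 2) - (n + 1) = ∑_{i < n-2} 2^i (n-1-i)`.
-/

namespace FlatPF

/-- Decomposition of a word into maximal weakly increasing runs. -/
def runs : List ℕ → List (List ℕ)
  | [] => []
  | a :: l =>
    match runs l with
    | [] => [[a]]
    | [] :: rs => [a] :: rs
    | (b :: t) :: rs => if a ≤ b then (a :: b :: t) :: rs else [a] :: (b :: t) :: rs

/-- The number of maximal weakly increasing runs of a word. -/
def numRuns (w : List ℕ) : ℕ := (runs w).length

/-- A word is flattened if the leading values of its runs are weakly increasing. -/
def IsFlattened (w : List ℕ) : Prop :=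
  List.Chain' (· ≤ ·) ((runs w).map (fun r => r.headD 0))

/-- A word is a parking function: entries in `[m]` and the weakly increasing
rearrangement `(a'_1, …, a'_m)` satisfies `a'_i ≤ i`. -/
def IsPF (w : List ℕ) : Prop :=
  (∀ x ∈ w, 1 ≤ x ∧ x ≤ w.length) ∧
  ∀ i < w.length, (w.mergeSort (· ≤ ·)).getD i 0 ≤ i + 1

/-- `w` is obtained by inserting the elements of the multiset `S` into some
permutation of `[n]`, keeping the letters of the permutation in relative order. -/
def IsInsertion (S : Multiset ℕ) (n : ℕ) (w : List ℕ) : Prop :=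
  (↑w : Multiset ℕ) = ↑(List.range' 1 n) + S ∧
  ∃ p : List ℕ, p.Perm (List.range' 1 n) ∧ p.Sublist w

/-- Flattened `S`-insertion parking functions of order `n`. -/
def flatIns (S : Multiset ℕ) (n : ℕ) : Set (List ℕ) :=
  {w | IsInsertion S n w ∧ IsFlattened w}

/-- Flattened `S`-insertion parking functions of order `n` with exactly `k` runs. -/
def flatInsK (S : Multiset ℕ) (n k : ℕ) : Set (List ℕ) :=
  {w | IsInsertion S n w ∧ IsFlattened w ∧ numRuns w = k}

/-- `f(S; n, k)`, the number of flattened `S`-insertion parking functions of order `n`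
with exactly `k` runs.  In particular `fS 0 n k` is the number of flattened
permutations of `[n]` with `k` runs. -/
noncomputable def fS (S : Multiset ℕ) (n k : ℕ) : ℕ := (flatInsK S n k).ncard

variable {a b : ℕ} {l t u v w r : List ℕ} {rs : List (List ℕ)} {M B : Multiset ℕ}

theorem sort_coe_of_pairwise (h : l.Pairwise (· ≤ ·)) : (l : Multiset ℕ).sort = l :=
  List.mergeSort_eq_self _ h

theorem eq_sort_of_pairwise (h : l.Pairwise (· ≤ ·)) (hl : (l : Multiset ℕ) = M) :
    l = M.sort := by
  rw [← hl, sort_coe_of_pairwise h]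

theorem headD_le_of_pairwise (h : l.Pairwise (· ≤ ·)) {x : ℕ} (hx : x ∈ l) : l.headD 0 ≤ x := by
  rcases l with _ | ⟨b, l⟩
  · simp at hx
  · rcases List.mem_cons.mp hx with rfl | hx
    · exact le_rfl
    · exact List.rel_of_pairwise_cons h hx

theorem le_getLastD_of_pairwise (h : l.Pairwise (· ≤ ·)) {x : ℕ} (hx : x ∈ l) :
    x ≤ l.getLastD 0 := by
  induction l generalizing x with
  | nil => simp at hx
  | cons b l ih =>
    rcases l with _ | ⟨c, l⟩
    · simp_all
    · have ih' := @ih h.of_cons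
      rw [List.getLastD_cons]
      rcases List.mem_cons.mp hx with rfl | hx
      · exact (List.rel_of_pairwise_cons h List.mem_cons_self).trans (ih' List.mem_cons_self)
      · exact ih' hx

theorem headD_mem (h : l ≠ []) : l.headD 0 ∈ l := by
  obtain ⟨c, l, rfl⟩ := List.exists_cons_of_ne_nil h
  exact List.mem_cons_self

theorem getLastD_mem (h : l ≠ []) : l.getLastD 0 ∈ l := by
  obtain ⟨c, l, rfl⟩ := List.exists_cons_of_ne_nil h
  exact List.mem_of_getLast? rfl

theorem pairwise_append_iff_getLastD_le_headD (hu : u.Pairwise (· ≤ ·)) (hv : v.Pairwise (· ≤ ·))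
    (hune : u ≠ []) (hvne : v ≠ []) : (u ++ v).Pairwise (· ≤ ·) ↔ u.getLastD 0 ≤ v.headD 0 :=
  ⟨fun h => List.pairwise_append.mp h |>.2.2 _ (getLastD_mem hune) _ (headD_mem hvne),
    fun h => List.pairwise_append.mpr ⟨hu, hv, fun _ hx _ hy =>
      (le_getLastD_of_pairwise hu hx).trans (h.trans (headD_le_of_pairwise hv hy))⟩⟩

theorem exists_runs_cons_eq (a : ℕ) (l : List ℕ) : ∃ t rs, runs (a :: l) = (a :: t) :: rs := by
  rw [runs]
  rcases runs l with _ | ⟨_ | ⟨b, t⟩, rs⟩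
  · exact ⟨[], [], rfl⟩
  · exact ⟨[], rs, rfl⟩
  · by_cases hab : a ≤ b
    · exact ⟨b :: t, rs, by simp [hab]⟩
    · exact ⟨[], (b :: t) :: rs, by simp [hab]⟩

theorem runs_cons_of_runs_eq (h : runs l = (b :: t) :: rs) :
    runs (a :: l) = if a ≤ b then (a :: b :: t) :: rs else [a] :: (b :: t) :: rs := by
  rw [runs, h]

theorem ne_nil_of_mem_runs (hr : r ∈ runs w) : r ≠ [] := by
  induction w generalizing r with
  | nil => simp [runs] at hr
  | cons a l ih =>
    rcases l with _ | ⟨b, l⟩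
    · simp_all [runs]
    · obtain ⟨t, rs, h⟩ := exists_runs_cons_eq b l
      rw [runs_cons_of_runs_eq h] at hr
      rw [h] at ih
      split_ifs at hr <;> aesop

theorem isChain_of_mem_runs (hr : r ∈ runs w) : r.IsChain (· ≤ ·) := by
  induction w generalizing r with
  | nil => simp [runs] at hr
  | cons a l ih =>
    rcases l with _ | ⟨b, l⟩
    · simp_all [runs]
    · obtain ⟨t, rs, h⟩ := exists_runs_cons_eq b l
      rw [runs_cons_of_runs_eq h] at hr
      rw [h] at ih
      split_ifs at hr with hab
      · rcases List.mem_cons.mp hr with rfl | hr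
        · exact (ih List.mem_cons_self).cons_cons hab
        · exact ih (List.mem_cons_of_mem _ hr)
      · rcases List.mem_cons.mp hr with rfl | hr
        · exact List.isChain_singleton a
        · exact ih hr

theorem flatten_runs (w : List ℕ) : (runs w).flatten = w := by
  induction w with
  | nil => rfl
  | cons a l ih =>
    rcases l with _ | ⟨b, l⟩
    · rfl
    · obtain ⟨t, rs, h⟩ := exists_runs_cons_eq b l
      rw [h] at ih
      rw [runs_cons_of_runs_eq h]
      split_ifs <;> simpa using ih

theorem headD_lt_getLastD_of_runs_eq (h : runs w = u :: v :: rs) : v.headD 0 < u.getLastD 0 := by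
  induction w generalizing u v rs with
  | nil => simp [runs] at h
  | cons a l ih =>
    rcases l with _ | ⟨b, l⟩
    · simp [runs] at h
    · obtain ⟨t, rs', hl⟩ := exists_runs_cons_eq b l
      rw [runs_cons_of_runs_eq hl] at h
      split_ifs at h with hab
      · obtain ⟨rfl, rfl⟩ := List.cons_eq_cons.mp h
        simpa using ih hl
      · obtain ⟨rfl, rfl, rfl⟩ : [a] = u ∧ b :: t = v ∧ rs' = rs := by simpa using h
        simpa using hab

theorem runs_eq_singleton (hw : w.IsChain (· ≤ ·)) (hne : w ≠ []) : runs w = [w] := by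
  induction w with
  | nil => contradiction
  | cons a l ih =>
    rcases l with _ | ⟨b, l⟩
    · rfl
    · rw [runs_cons_of_runs_eq (ih hw.tail (List.cons_ne_nil _ _)),
        if_pos (List.isChain_cons_cons.mp hw).1]

theorem runs_append_of_lt (hu : u.IsChain (· ≤ ·)) (hune : u ≠ []) (hvne : v ≠ [])
    (hlt : v.headD 0 < u.getLastD 0) : runs (u ++ v) = u :: runs v := by
  induction u with
  | nil => contradiction
  | cons a u ih =>
    rcases u with _ | ⟨b, u⟩
    · obtain ⟨c, v, rfl⟩ := List.exists_cons_of_ne_nil hvne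
      obtain ⟨t, rs, h⟩ := exists_runs_cons_eq c v
      rw [List.singleton_append, runs_cons_of_runs_eq h, if_neg (by simpa using hlt), h]
    · obtain ⟨t, rs, h⟩ := exists_runs_cons_eq b (u ++ v)
      have ih' := ih hu.tail (List.cons_ne_nil _ _) (by simpa using hlt)
      rw [List.cons_append, List.cons_append, runs_cons_of_runs_eq h]
      rw [List.cons_append, h] at ih'
      simp only [List.cons.injEq, true_and] at ih'
      obtain ⟨rfl, rfl⟩ := ih'
      rw [if_pos (List.isChain_cons_cons.mp hu).1]

theorem runs_eq_pair_iff : runs w = [u, v] ↔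
    w = u ++ v ∧ u ≠ [] ∧ v ≠ [] ∧ u.IsChain (· ≤ ·) ∧ v.IsChain (· ≤ ·) ∧
      v.headD 0 < u.getLastD 0 := by
  constructor
  · intro h
    have hmem : u ∈ runs w ∧ v ∈ runs w := by simp [h]
    refine ⟨by simpa [h] using (flatten_runs w).symm, ne_nil_of_mem_runs hmem.1,
      ne_nil_of_mem_runs hmem.2, isChain_of_mem_runs hmem.1, isChain_of_mem_runs hmem.2,
      headD_lt_getLastD_of_runs_eq h⟩
  · rintro ⟨rfl, hune, hvne, hu, hv, hlt⟩
    rw [runs_append_of_lt hu hune hvne hlt, runs_eq_singleton hv hvne]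

theorem isFlattened_and_numRuns_eq_two_iff :
    IsFlattened w ∧ numRuns w = 2 ↔ ∃ u v, runs w = [u, v] ∧ u.headD 0 ≤ v.headD 0 := by
  rw [numRuns, List.length_eq_two]
  constructor
  · rintro ⟨hflat, u, v, h⟩
    rw [IsFlattened, h] at hflat
    exact ⟨u, v, h, List.isChain_pair.mp hflat⟩
  · rintro ⟨u, v, h, hle⟩
    refine ⟨?_, u, v, h⟩
    rw [IsFlattened, h]
    exact List.isChain_pair.mpr hle

def sortedSplit (M B : Multiset ℕ) : List ℕ := (M - B).sort ++ B.sort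

theorem sortedSplit_eq_sort_iff :
    sortedSplit M B = M.sort ↔ ∃ k ≤ Multiset.card M, B = ↑(M.sort.drop k) := by
  constructor
  · intro h
    refine ⟨(M - B).sort.length, ?_, ?_⟩
    · exact (Multiset.length_sort _).trans_le (Multiset.card_le_card tsub_le_self)
    · rw [← h, sortedSplit, List.drop_left, Multiset.sort_eq]
  · rintro ⟨k, -, rfl⟩
    have hM : M - ↑(M.sort.drop k) = ↑(M.sort.take k) := calc
      _ = (M.sort.take k : Multiset ℕ) + ↑(M.sort.drop k) - ↑(M.sort.drop k) := by
        rw [Multiset.coe_add, List.take_append_drop, Multiset.sort_eq]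
      _ = (M.sort.take k : Multiset ℕ) := add_tsub_cancel_right _ _
    rw [sortedSplit, hM, sort_coe_of_pairwise ((M.pairwise_sort _).sublist (List.take_sublist _ _)),
      sort_coe_of_pairwise ((M.pairwise_sort _).sublist (List.drop_sublist _ _)),
      List.take_append_drop]

theorem coe_sortedSplit (hB : B ≤ M) : (sortedSplit M B : Multiset ℕ) = M := by
  rw [sortedSplit, ← Multiset.coe_add, Multiset.sort_eq, Multiset.sort_eq, tsub_add_cancel_of_le hB]

theorem card_filter_sortedSplit_eq_sort (M : Multiset ℕ) :
    ((Finset.Iic M).filter (fun B => sortedSplit M B = M.sort)).card = Multiset.card M + 1 := by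
  have hdrop : (Finset.Iic M).filter (fun B => sortedSplit M B = M.sort) =
      (Finset.range (Multiset.card M + 1)).image (fun k => ↑(M.sort.drop k)) := by
    ext B
    simp only [Finset.mem_filter, Finset.mem_Iic, sortedSplit_eq_sort_iff, Finset.mem_image,
      Finset.mem_range, Nat.lt_succ_iff]
    constructor
    · rintro ⟨-, k, hk, rfl⟩
      exact ⟨k, hk, rfl⟩
    · rintro ⟨k, hk, rfl⟩
      refine ⟨?_, k, hk, rfl⟩
      conv_rhs => rw [← Multiset.sort_eq M (· ≤ ·)]
      exact Multiset.coe_le.mpr (List.drop_sublist _ _).subperm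
  rw [hdrop, Finset.card_image_of_injOn, Finset.card_range]
  intro k hk j hj hkj
  have := congrArg Multiset.card hkj
  simp only [Multiset.coe_card, List.length_drop, Multiset.length_sort] at this
  simp only [Finset.coe_range, Set.mem_Iio] at hk hj
  omega

theorem runs_cons_sortedSplit (ha : ∀ x ∈ M, a < x) (hB : B ≤ M) (hne : sortedSplit M B ≠ M.sort) :
    runs (a :: sortedSplit M B) = [a :: (M - B).sort, B.sort] := by
  have hBne : B.sort ≠ [] := by
    intro h
    obtain rfl : B = 0 := by rw [← Multiset.sort_eq B (· ≤ ·), h]; rfl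
    exact hne (by simp [sortedSplit])
  have hsorted : (a :: (M - B).sort).Pairwise (· ≤ ·) :=
    List.pairwise_cons.mpr ⟨fun x hx => (ha x (Multiset.mem_of_le tsub_le_self
      ((Multiset.mem_sort _).mp hx))).le, Multiset.pairwise_sort _ _⟩
  rw [runs_eq_pair_iff]
  refine ⟨rfl, List.cons_ne_nil _ _, hBne, List.isChain_iff_pairwise.mpr hsorted,
    List.isChain_iff_pairwise.mpr (Multiset.pairwise_sort _ _), ?_⟩
  by_contra! hle
  rw [← pairwise_append_iff_getLastD_le_headD hsorted (Multiset.pairwise_sort _ _)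
    (List.cons_ne_nil _ _) hBne] at hle
  exact hne (eq_sort_of_pairwise (List.pairwise_cons.mp hle).2 (coe_sortedSplit hB))

theorem injOn_cons_sortedSplit (ha : ∀ x ∈ M, a < x) :
    Set.InjOn (fun B => a :: sortedSplit M B) {B | B ≤ M ∧ sortedSplit M B ≠ M.sort} := by
  rintro B ⟨hB, hne⟩ B' ⟨hB', hne'⟩ h
  have hruns := congrArg runs h
  simp only [runs_cons_sortedSplit ha hB hne, runs_cons_sortedSplit ha hB' hne',
    List.cons.injEq, and_true] at hruns
  rw [← Multiset.sort_eq B (· ≤ ·), hruns.2, Multiset.sort_eq]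

theorem exists_eq_cons_sortedSplit (ha : ∀ x ∈ M, a < x) (hw : (w : Multiset ℕ) = a ::ₘ M)
    (hruns : runs w = [u, v]) (hhead : u.headD 0 ≤ v.headD 0) :
    ∃ B ≤ M, sortedSplit M B ≠ M.sort ∧ a :: sortedSplit M B = w := by
  obtain ⟨rfl, hune, hvne, hu, hv, hlt⟩ := runs_eq_pair_iff.mp hruns
  rw [List.isChain_iff_pairwise] at hu hv
  have hge : ∀ x ∈ u ++ v, a ≤ x := by
    intro x hx
    rcases Multiset.mem_cons.mp (hw ▸ Multiset.mem_coe.mpr hx) with rfl | hx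
    exacts [le_rfl, (ha x hx).le]
  have hua : u.headD 0 = a := by
    refine le_antisymm ?_ (hge _ (List.mem_append_left _ (headD_mem hune)))
    rcases List.mem_append.mp (Multiset.mem_coe.mp (hw ▸ Multiset.mem_cons_self a M)) with h | h
    exacts [headD_le_of_pairwise hu h, hhead.trans (headD_le_of_pairwise hv h)]
  obtain ⟨u, rfl⟩ : ∃ u', u = a :: u' := by
    obtain ⟨c, u, rfl⟩ := List.exists_cons_of_ne_nil hune
    exact ⟨u, by simp_all⟩
  have hM : ((u ++ v : List ℕ) : Multiset ℕ) = M :=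
    (Multiset.cons_inj_right a).mp (by simpa using hw)
  have hsplit : sortedSplit M v = u ++ v := by
    rw [sortedSplit, ← hM, ← Multiset.coe_add, add_tsub_cancel_right,
      sort_coe_of_pairwise hu.of_cons, sort_coe_of_pairwise hv]
  refine ⟨v, by rw [← hM, ← Multiset.coe_add]; exact Multiset.le_add_left _ _, fun h => ?_,
    by rw [hsplit]; rfl⟩
  have hsorted : (a :: u ++ v).Pairwise (· ≤ ·) := by
    rw [List.cons_append, List.pairwise_cons]
    refine ⟨fun x hx => hge x (List.mem_cons_of_mem _ hx), ?_⟩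
    rw [← hsplit, h]
    exact Multiset.pairwise_sort _ _
  rw [pairwise_append_iff_getLastD_le_headD hu hv hune hvne] at hsorted
  exact absurd hlt (not_lt.mpr hsorted)

theorem flattened_two_runs_eq_image (ha : ∀ x ∈ M, a < x) :
    {w : List ℕ | (w : Multiset ℕ) = a ::ₘ M ∧ IsFlattened w ∧ numRuns w = 2} =
      (fun B => a :: sortedSplit M B) '' {B | B ≤ M ∧ sortedSplit M B ≠ M.sort} := by
  ext w
  simp only [Set.mem_ofPred_eq, Set.mem_image, isFlattened_and_numRuns_eq_two_iff]
  constructor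
  · rintro ⟨hw, u, v, hruns, hhead⟩
    obtain ⟨B, hB, hne, rfl⟩ := exists_eq_cons_sortedSplit ha hw hruns hhead
    exact ⟨B, ⟨hB, hne⟩, rfl⟩
  · rintro ⟨B, ⟨hB, hne⟩, rfl⟩
    have hruns := runs_cons_sortedSplit ha hB hne
    have hBne := (runs_eq_pair_iff.mp hruns).2.2.1
    refine ⟨by rw [← Multiset.cons_coe, coe_sortedSplit hB], _, _, hruns, ?_⟩
    exact (ha _ ((Multiset.mem_sort _).mp (headD_mem hBne) |> Multiset.mem_of_le hB)).le

theorem ncard_flattened_two_runs (ha : ∀ x ∈ M, a < x) :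
    {w : List ℕ | (w : Multiset ℕ) = a ::ₘ M ∧ IsFlattened w ∧ numRuns w = 2}.ncard =
      (Finset.Iic M).card - (Multiset.card M + 1) := by
  have hgood : {B | B ≤ M ∧ sortedSplit M B ≠ M.sort} =
      ↑((Finset.Iic M).filter (fun B => sortedSplit M B ≠ M.sort)) := by
    ext B
    simp
  have hcard := Finset.card_filter_add_card_filter_not (s := Finset.Iic M)
    (p := fun B => sortedSplit M B = M.sort)
  rw [card_filter_sortedSplit_eq_sort] at hcard
  rw [flattened_two_runs_eq_image ha, (injOn_cons_sortedSplit ha).ncard_image, hgood,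
    Set.ncard_coe_finset]
  simp only [ne_eq]
  omega

theorem isInsertion_iff {S : Multiset ℕ} {n : ℕ} {w : List ℕ} :
    IsInsertion S n w ↔ (w : Multiset ℕ) = ↑(List.range' 1 n) + S := by
  refine ⟨And.left, fun hw => ⟨hw, ?_⟩⟩
  obtain ⟨p, hp, hpw⟩ := Multiset.coe_le.mp (hw ▸ Multiset.le_add_right _ S)
  exact ⟨p, hp, hpw⟩

theorem range'_one_add_two {n : ℕ} (hn : 2 ≤ n) :
    (↑(List.range' 1 n) + {2} : Multiset ℕ) = 1 ::ₘ 2 ::ₘ 2 ::ₘ ↑(List.range' 3 (n - 2)) := by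
  obtain ⟨m, rfl⟩ := Nat.exists_eq_add_of_le' hn
  rw [Nat.add_sub_cancel, List.range'_succ, List.range'_succ, add_comm, Multiset.singleton_add,
    ← Multiset.cons_coe, ← Multiset.cons_coe, Multiset.cons_swap 2 1]

theorem card_Iic_cons_cons {x : ℕ} {S : List ℕ} (hS : S.Nodup) (hx : x ∉ S) :
    (Finset.Iic (x ::ₘ x ::ₘ (S : Multiset ℕ))).card = 3 * 2 ^ S.length := by
  have hcount : ∀ y ∈ S, Multiset.count y (x ::ₘ x ::ₘ (S : Multiset ℕ)) = 1 := by
    intro y hy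
    have hyx : y ≠ x := fun h => hx (h ▸ hy)
    rw [Multiset.count_cons_of_ne hyx, Multiset.count_cons_of_ne hyx, Multiset.coe_count,
      List.count_eq_one_of_mem hS hy]
  rw [Multiset.card_Iic, Multiset.toFinset_cons, Multiset.toFinset_cons, Finset.insert_idem,
    Finset.prod_insert (by simpa using hx), Finset.prod_congr rfl (fun y hy => by
      rw [hcount y (by simpa using hy)]), Finset.prod_const, List.toFinset_coe,
    List.toFinset_card_of_nodup hS, Multiset.count_cons_self, Multiset.count_cons_self,
    Multiset.count_eq_zero.mpr (by simpa using hx)]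

theorem sum_pow_mul_add (m : ℕ) :
    ∑ i ∈ Finset.range m, 2 ^ i * (m + 1 - i) + (m + 3) = 3 * 2 ^ m := by
  induction m with
  | zero => rfl
  | succ m ih =>
    rw [Finset.sum_range_succ', pow_succ]
    have hshift : ∀ i ∈ Finset.range m, 2 ^ (i + 1) * (m + 1 + 1 - (i + 1)) =
        2 * (2 ^ i * (m + 1 - i)) := fun i _ => by rw [pow_succ]; grind
    rw [Finset.sum_congr rfl hshift, ← Finset.mul_sum]
    omega

end FlatPF

open FlatPF in
/-- For `n ≥ 3`, the number of flattened `{2}`-insertion parking functions of order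
`n` with exactly two runs is `∑_{i=0}^{n-3} 2^i (n-1-i)`. -/
theorem stmt9 (n : ℕ) (hn : 3 ≤ n) :
    fS {2} n 2 = ∑ i ∈ Finset.range (n - 2), 2 ^ i * (n - 1 - i) := by
  obtain ⟨m, rfl⟩ := Nat.exists_eq_add_of_le' (show 2 ≤ n by omega)
  set M : Multiset ℕ := 2 ::ₘ 2 ::ₘ ↑(List.range' 3 m)
  have hwords : flatInsK {2} (m + 2) 2 =
      {w : List ℕ | (w : Multiset ℕ) = 1 ::ₘ M ∧ IsFlattened w ∧ numRuns w = 2} := by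
    ext w
    simp only [flatInsK, isInsertion_iff, range'_one_add_two (Nat.le_add_left 2 m),
      Nat.add_sub_cancel]
    rfl
  have hmin : ∀ x ∈ M, 1 < x := by
    simp only [M, Multiset.mem_cons, Multiset.mem_coe, List.mem_range'_1]
    omega
  have hcard : (Finset.Iic M).card = 3 * 2 ^ m := by
    rw [card_Iic_cons_cons List.nodup_range' (by simp), List.length_range']
  rw [fS, hwords, ncard_flattened_two_runs hmin, hcard, ← sum_pow_mul_add m]
  simp only [M, Multiset.cons_coe, Multiset.coe_card, List.length_cons, List.length_range',
    add_tsub_cancel_right, Nat.add_one_sub_one]
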